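/- arXiv:1102.4022 — 5 statements merged into one kernel-verified Lean document; each statement's English description precedes it below -/
import Mathlib

section
/- Let F ∈ C²([-1,1]) be a balanced double-well potential (F(±1)=0, F'(±1)=0, F''(±1)>0, F'(t)>0 on (-1,0), F'(t)<0 on (0,1)). If g : ℝ → ℝ solves g'' = F'(g), |g| ≤ 1, with g(s) → ±1 as s → ±∞, then g satisfies the first integral identity (1/2)(g'(s))² = F(g(s)) for all s ∈ ℝ. -/
open Set Filter Topology

/-! The energy `(1/2) g'² - F ∘ g` is constant along any solution of `g'' = F'(g)`. Since
`g → 1` at `+∞`, the mean value theorem gives points `ξₙ → ∞` with `g'(ξₙ) → 0`, and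
along them the energy tends to `-F(1) = 0`. -/

/-- Where `g` hits an endpoint of `[a, b]` it is extremal, so `deriv g s = 0` and the value of
`deriv F` there (a junk value, `F` being differentiable only within `[a, b]`) does not matter. -/
theorem hasDerivAt_comp_of_forall_mem_Icc {F g : ℝ → ℝ} {a b s : ℝ}
    (hF : DifferentiableOn ℝ F (Icc a b)) (hg : DifferentiableAt ℝ g s)
    (hmem : ∀ t, g t ∈ Icc a b) :
    HasDerivAt (fun t => F (g t)) (deriv F (g s) * deriv g s) s := by
  have hcomp : HasDerivAt (fun t => F (g t)) (deriv g s * derivWithin F (Icc a b) (g s)) s :=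
    (hF (g s) (hmem s)).hasDerivWithinAt.scomp_hasDerivAt s hg.hasDerivAt hmem
  rcases (hmem s).1.eq_or_lt with hbot | hbot
  · have hmin : IsLocalMin g s := .of_forall fun t => hbot ▸ (hmem t).1
    simpa [hmin.deriv_eq_zero] using hcomp
  rcases (hmem s).2.eq_or_lt with htop | htop
  · have hmax : IsLocalMax g s := .of_forall fun t => htop ▸ (hmem t).2
    simpa [hmax.deriv_eq_zero] using hcomp
  rw [derivWithin_of_mem_nhds (Icc_mem_nhds hbot htop), mul_comm] at hcomp
  exact hcomp

theorem half_deriv_sq_sub_comp_eq {F g : ℝ → ℝ} {a b : ℝ}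
    (hF : DifferentiableOn ℝ F (Icc a b)) (hg : Differentiable ℝ g)
    (hg' : Differentiable ℝ (deriv g)) (hmem : ∀ t, g t ∈ Icc a b)
    (hode : ∀ s, deriv (deriv g) s = deriv F (g s)) (s t : ℝ) :
    1 / 2 * deriv g s ^ 2 - F (g s) = 1 / 2 * deriv g t ^ 2 - F (g t) := by
  have henergy : ∀ x, HasDerivAt (fun t => 1 / 2 * deriv g t ^ 2 - F (g t)) 0 x := by
    intro x
    have hkin := ((hg' x).hasDerivAt.pow 2).const_mul (1 / 2 : ℝ)
    refine (hkin.sub (hasDerivAt_comp_of_forall_mem_Icc hF (hg x) hmem)).congr_deriv ?_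
    rw [hode]
    ring
  exact is_const_of_deriv_eq_zero (fun x => (henergy x).differentiableAt)
    (fun x => (henergy x).deriv) s t

theorem exists_tendsto_atTop_tendsto_deriv_zero {f : ℝ → ℝ} {l : ℝ}
    (hf : Differentiable ℝ f) (hlim : Tendsto f atTop (𝓝 l)) :
    ∃ ξ : ℕ → ℝ, Tendsto ξ atTop atTop ∧ Tendsto (fun n => deriv f (ξ n)) atTop (𝓝 0) := by
  have hmvt : ∀ n : ℕ, ∃ c ∈ Ioo (n : ℝ) (n + 1), deriv f c = (f (n + 1) - f n) / (n + 1 - n) :=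
    fun n => exists_deriv_eq_slope f (by linarith) hf.continuous.continuousOn
      hf.differentiableOn
  choose ξ hξ hslope using hmvt
  refine ⟨ξ, tendsto_atTop_mono (fun n => (hξ n).1.le) tendsto_natCast_atTop_atTop, ?_⟩
  have hshift : Tendsto (fun n : ℕ => f (n + 1)) atTop (𝓝 l) :=
    hlim.comp (tendsto_atTop_add_const_right _ 1 tendsto_natCast_atTop_atTop)
  have hdiff := hshift.sub (hlim.comp tendsto_natCast_atTop_atTop)
  rw [sub_self] at hdiff
  simpa [hslope] using hdiff

theorem stmt_0_general
    (F g : ℝ → ℝ)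
    (hF : ContDiffOn ℝ 2 F (Set.Icc (-1) 1))
    (hF1 : F 1 = 0)
    (hg : ContDiff ℝ 2 g)
    (hode : ∀ s : ℝ, deriv (deriv g) s = deriv F (g s))
    (hgb : ∀ s : ℝ, |g s| ≤ 1)
    (hgtop : Filter.Tendsto g Filter.atTop (nhds 1)) :
    ∀ s : ℝ, (1 / 2) * (deriv g s) ^ 2 = F (g s) := by
  have hmem : ∀ s, g s ∈ Icc (-1 : ℝ) 1 := fun s => abs_le.mp (hgb s)
  have hconst := half_deriv_sq_sub_comp_eq (hF.differentiableOn two_ne_zero)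
    (hg.differentiable two_ne_zero) hg.differentiable_deriv_two hmem hode
  obtain ⟨ξ, hξ, hderiv⟩ :=
    exists_tendsto_atTop_tendsto_deriv_zero (hg.differentiable two_ne_zero) hgtop
  have hFg : Tendsto (fun n => F (g (ξ n))) atTop (𝓝 0) := by
    have hFc : ContinuousWithinAt F (Icc (-1) 1) 1 := hF.continuousOn 1 ⟨by norm_num, le_rfl⟩
    rw [← hF1]
    exact hFc.tendsto.comp
      (tendsto_nhdsWithin_iff.mpr ⟨hgtop.comp hξ, .of_forall fun n => hmem (ξ n)⟩)
  have henergy := ((hderiv.pow 2).const_mul (1 / 2)).sub hFg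
  intro s
  have hzero : 1 / 2 * deriv g s ^ 2 - F (g s) = 0 := by
    have hconstSeq := henergy.congr fun n => (hconst s (ξ n)).symm
    simpa using tendsto_const_nhds_iff.mp hconstSeq
  linarith

/-- First integral identity for the 1-D heteroclinic of the Allen–Cahn equation. -/
theorem stmt_0
    (F g : ℝ → ℝ)
    (hF : ContDiffOn ℝ 2 F (Set.Icc (-1) 1))
    (hF1 : F 1 = 0) (hFm1 : F (-1) = 0)
    (hF'1 : deriv F 1 = 0) (hF'm1 : deriv F (-1) = 0)
    (hF''1 : 0 < deriv (deriv F) 1) (hF''m1 : 0 < deriv (deriv F) (-1))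
    (hFpos : ∀ t ∈ Set.Ioo (-1 : ℝ) 0, 0 < deriv F t)
    (hFneg : ∀ t ∈ Set.Ioo (0 : ℝ) 1, deriv F t < 0)
    (hg : ContDiff ℝ 2 g)
    (hode : ∀ s : ℝ, deriv (deriv g) s = deriv F (g s))
    (hgb : ∀ s : ℝ, |g s| ≤ 1)
    (hgtop : Filter.Tendsto g Filter.atTop (nhds 1))
    (hgbot : Filter.Tendsto g Filter.atBot (nhds (-1))) :
    ∀ s : ℝ, (1 / 2) * (deriv g s) ^ 2 = F (g s) :=
  stmt_0_general F g hF hF1 hg hode hgb hgtop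
end

section
/- Suppose u : ℝ₊ × ℝ → ℝ solves u_xx + u_yy = F'(u) with |u| < 1, u_x(0,y) = 0, u_x(x,y) > 0 for x > 0, and u and its derivatives decay so that h(y) := ∫_0^∞ u_y u_x dx is well-defined. Then |h(y)| ≤ β − G(u(0,y)) < β for every y, where G(t) = ∫_{-1}^{t} √(2F(s)) ds and β = G(1). -/
/-!
By the Modica estimate, `|u_y| u_x ≤ √(2F(u)) u_x = ∂ₓ G(u)`, so `|h(y)|` is at most the increase
of `G` along the increasing profile `x ↦ u(x, y)`, that is `G(1) - G(u(0, y))`.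
The strict inequality amounts to `F(u(0, y)) ≠ 0`. If `F` vanished at `c = u(0, y)`, then `c`
would be an interior minimum of the `C²` function `F`, so `F(s) ≤ M (s - c)²` and Modica would
give `u_x ≤ √(2M) (u - c)`; by Grönwall `u(·, y)` would stay equal to `c`, contradicting `u_x > 0`.
-/

open Real MeasureTheory Set

theorem IsLocalMin.exists_le_add_mul_sq {F : ℝ → ℝ} {a b c : ℝ}
    (hF : ContDiffOn ℝ 2 F (Icc a b)) (hc : c ∈ Ioo a b) (hmin : IsLocalMin F c) :
    ∃ M, 0 ≤ M ∧ ∀ s ∈ Icc c b, F s ≤ F c + M * (s - c) ^ 2 := by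
  have hcb : c < b := hc.2
  have hFc : ContDiffOn ℝ 2 F (Icc c b) := hF.mono (Icc_subset_Icc_left hc.1.le)
  obtain ⟨C, hC⟩ := isCompact_Icc.exists_bound_of_continuousOn
    (hFc.continuousOn_iteratedDerivWithin le_rfl (uniqueDiffOn_Icc hcb))
  have hF'c : derivWithin F (Icc c b) c = 0 := by
    have hdiff : DifferentiableAt ℝ F c :=
      (hF.differentiableOn (by norm_num) c (Ioo_subset_Icc_self hc)).differentiableAt
        (Icc_mem_nhds hc.1 hc.2)
    rw [hdiff.derivWithin (uniqueDiffOn_Icc hcb c (left_mem_Icc.2 hcb.le)), hmin.deriv_eq_zero]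
  refine ⟨C, (norm_nonneg _).trans (hC c (left_mem_Icc.2 hcb.le)), fun s hs => ?_⟩
  have htaylor := taylor_mean_remainder_bound (n := 1) hcb.le hFc hs hC
  norm_num [taylorWithinEval_succ, hF'c] at htaylor
  linarith [le_abs_self (F s - F c)]

theorem eq_of_sq_deriv_le_of_apply_eq_zero {F v : ℝ → ℝ} {a b x₀ x₁ : ℝ} (hx : x₀ ≤ x₁)
    (hF : ContDiffOn ℝ 2 F (Icc a b)) (hF0 : ∀ s ∈ Icc a b, 0 ≤ F s)
    (hc : v x₀ ∈ Ioo a b) (hFc : F (v x₀) = 0) (hv : Differentiable ℝ v)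
    (hvmem : ∀ x ∈ Icc x₀ x₁, v x ∈ Icc (v x₀) b)
    (hv' : ∀ x ∈ Icc x₀ x₁, deriv v x ^ 2 ≤ 2 * F (v x)) :
    v x₁ = v x₀ := by
  have hmin : IsLocalMin F (v x₀) := by
    filter_upwards [Icc_mem_nhds hc.1 hc.2] with s hs
    exact hFc ▸ hF0 s hs
  obtain ⟨M, hM, hquad⟩ := hmin.exists_le_add_mul_sq hF hc
  have hbound : ∀ x ∈ Ico x₀ x₁, ‖deriv v x‖ ≤ √(2 * M) * ‖v x - v x₀‖ := by
    intro x hx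
    have hFv := hquad (v x) (hvmem x (Ico_subset_Icc_self hx))
    rw [hFc, zero_add] at hFv
    rw [Real.norm_eq_abs, Real.norm_eq_abs, ← sqrt_sq_eq_abs (v x - v x₀),
      ← sqrt_mul (by positivity)]
    exact abs_le_sqrt (by nlinarith [hv' x (Ico_subset_Icc_self hx)])
  have hzero := eq_zero_of_abs_deriv_le_mul_abs_self_of_eq_zero_right
    (f := fun x => v x - v x₀) (hv.continuous.sub continuous_const).continuousOn
    (fun x _ => ((hv x).hasDerivAt.sub_const (v x₀)).hasDerivWithinAt) (sub_self _) hbound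
  exact sub_eq_zero.mp (hzero x₁ (right_mem_Icc.2 hx))

theorem integral_Ioi_le_of_forall_intervalIntegral_le {f : ℝ → ℝ} {a C : ℝ}
    (hf : IntegrableOn f (Ioi a)) (h : ∀ T, a ≤ T → ∫ x in a..T, f x ≤ C) :
    ∫ x in Ioi a, f x ≤ C :=
  le_of_tendsto (intervalIntegral_tendsto_integral_Ioi a hf Filter.tendsto_id)
    (Filter.eventually_atTop.mpr ⟨a, h⟩)

section ModicaBound

variable {g v p : ℝ → ℝ} {a b x₀ : ℝ}

theorem intervalIntegral_abs_mul_deriv_le {T : ℝ} (hT : x₀ ≤ T)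
    (hg : ContinuousOn g (Icc a b)) (hg0 : ∀ s ∈ Icc a b, 0 ≤ g s) (hv : ContDiff ℝ 1 v)
    (hvmem : ∀ x ∈ Icc x₀ T, v x ∈ Icc a b) (hv' : ∀ x ∈ Icc x₀ T, 0 ≤ deriv v x)
    (hp : ∀ x ∈ Icc x₀ T, |p x| ≤ g (v x))
    (hpv : IntervalIntegrable (fun x => p x * deriv v x) volume x₀ T) :
    ∫ x in x₀..T, |p x * deriv v x| ≤ ∫ s in v x₀..b, g s := by
  have hvdiff : Differentiable ℝ v := hv.differentiable one_ne_zero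
  have hvmono : v x₀ ≤ v T :=
    monotoneOn_of_deriv_nonneg (convex_Icc x₀ T) hvdiff.continuous.continuousOn
      hvdiff.differentiableOn (fun x hx => hv' x (interior_subset hx))
      (left_mem_Icc.2 hT) (right_mem_Icc.2 hT) hT
  have hgv : ContinuousOn (g ∘ v) (uIcc x₀ T) := by
    rw [uIcc_of_le hT]
    exact hg.comp hvdiff.continuous.continuousOn hvmem
  have hv0 := hvmem x₀ (left_mem_Icc.2 hT)
  have hvT := hvmem T (right_mem_Icc.2 hT)
  calc ∫ x in x₀..T, |p x * deriv v x|
      ≤ ∫ x in x₀..T, (g ∘ v) x * deriv v x := by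
        refine intervalIntegral.integral_mono_on hT hpv.abs
          (hgv.mul (hv.continuous_deriv le_rfl).continuousOn).intervalIntegrable
          fun x hx => ?_
        rw [abs_mul, abs_of_nonneg (hv' x hx)]
        exact mul_le_mul_of_nonneg_right (hp x hx) (hv' x hx)
    _ = ∫ s in v x₀..v T, g s :=
        intervalIntegral.integral_comp_mul_deriv' (fun x _ => (hvdiff x).hasDerivAt)
          (hv.continuous_deriv le_rfl).continuousOn
          (hg.mono (by rw [uIcc_of_le hT]; exact image_subset_iff.2 hvmem))
    _ ≤ ∫ s in v x₀..b, g s :=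
        intervalIntegral.integral_mono_interval le_rfl hvmono hvT.2
          ((ae_restrict_iff' measurableSet_Ioc).2 (ae_of_all _ fun s hs =>
            hg0 s ⟨hv0.1.trans hs.1.le, hs.2⟩))
          (hg.mono (uIcc_subset_Icc hv0 ⟨hv0.1.trans hv0.2, le_rfl⟩)).intervalIntegrable

theorem abs_integral_Ioi_mul_deriv_le
    (hg : ContinuousOn g (Icc a b)) (hg0 : ∀ s ∈ Icc a b, 0 ≤ g s) (hv : ContDiff ℝ 1 v)
    (hvmem : ∀ x ∈ Ici x₀, v x ∈ Icc a b) (hv' : ∀ x ∈ Ici x₀, 0 ≤ deriv v x)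
    (hp : ∀ x ∈ Ici x₀, |p x| ≤ g (v x))
    (hpv : IntegrableOn (fun x => p x * deriv v x) (Ioi x₀)) :
    |∫ x in Ioi x₀, p x * deriv v x| ≤ ∫ s in v x₀..b, g s := by
  refine (abs_integral_le_integral_abs).trans
    (integral_Ioi_le_of_forall_intervalIntegral_le hpv.abs fun T hT => ?_)
  exact intervalIntegral_abs_mul_deriv_le hT hg hg0 hv (fun x hx => hvmem x hx.1)
    (fun x hx => hv' x hx.1) (fun x hx => hp x hx.1)
    ((intervalIntegrable_iff_integrableOn_Ioc_of_le hT).2 (hpv.mono_set Ioc_subset_Ioi_self))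

end ModicaBound

theorem stmt_4_general
    (F : ℝ → ℝ) (u : ℝ → ℝ → ℝ)
    (hF : ContDiffOn ℝ 2 F (Set.Icc (-1) 1))
    (hFnonneg : ∀ s ∈ Set.Icc (-1 : ℝ) 1, 0 ≤ F s)
    (hu : ContDiff ℝ 3 (fun p : ℝ × ℝ => u p.1 p.2))
    (hub : ∀ x y : ℝ, 0 ≤ x → |u x y| < 1)
    (hneumann : ∀ y : ℝ, deriv (fun t => u t y) 0 = 0)
    (hmono : ∀ x y : ℝ, 0 < x → 0 < deriv (fun t => u t y) x)
    (hmodica : ∀ x y : ℝ, 0 ≤ x →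
      (deriv (fun t => u t y) x) ^ 2 + (deriv (u x) y) ^ 2 ≤ 2 * F (u x y))
    (hint : ∀ y : ℝ, IntegrableOn
      (fun x => (deriv (u x) y) * (deriv (fun t => u t y) x)) (Set.Ioi (0 : ℝ)))
    (G : ℝ → ℝ)
    (hG : ∀ t : ℝ, G t = ∫ s in (-1 : ℝ)..t, Real.sqrt (2 * F s))
    (β : ℝ) (hβ : β = G 1)
    (h : ℝ → ℝ)
    (hh : ∀ y : ℝ, h y = ∫ x in Set.Ioi (0 : ℝ),
      (deriv (u x) y) * (deriv (fun t => u t y) x)) :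
    ∀ y : ℝ, |h y| ≤ β - G (u 0 y) ∧ β - G (u 0 y) < β := by
  intro y
  set v := fun t => u t y
  have hv : ContDiff ℝ 1 v := (hu.comp (contDiff_id.prodMk contDiff_const)).of_le (by norm_num)
  have hvIoo (x : ℝ) (hx : x ∈ Ici 0) : v x ∈ Ioo (-1) 1 := abs_lt.mp (hub x y hx)
  have hvIcc (x : ℝ) (hx : x ∈ Ici 0) : v x ∈ Icc (-1) 1 := Ioo_subset_Icc_self (hvIoo x hx)
  have hvmono : StrictMonoOn v (Ici 0) :=
    strictMonoOn_of_deriv_pos (convex_Ici 0) hv.continuous.continuousOn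
      fun x hx => hmono x y (by simpa using hx)
  have hv' (x : ℝ) (hx : x ∈ Ici 0) : 0 ≤ deriv v x :=
    hx.eq_or_lt.elim (fun h0 => h0 ▸ (hneumann y).ge) fun hpos => (hmono x y hpos).le
  have hg : ContinuousOn (fun s => √(2 * F s)) (Icc (-1) 1) :=
    (continuousOn_const.mul hF.continuousOn).sqrt
  have hFc : F (v 0) ≠ 0 := by
    intro hFv0
    refine (hvmono self_mem_Ici (mem_Ici.2 zero_le_one) zero_lt_one).ne' ?_
    exact eq_of_sq_deriv_le_of_apply_eq_zero zero_le_one hF hFnonneg (hvIoo 0 self_mem_Ici) hFv0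
      (hv.differentiable one_ne_zero)
      (fun x hx => ⟨hvmono.monotoneOn self_mem_Ici hx.1 hx.1, (hvIcc x hx.1).2⟩)
      fun x hx => by nlinarith [hmodica x y hx.1]
  have hGpos : 0 < G (v 0) := by
    have hc := hvIoo 0 self_mem_Ici
    rw [hG]
    exact intervalIntegral.integral_pos hc.1 (hg.mono (Icc_subset_Icc_right hc.2.le))
      (fun s _ => sqrt_nonneg _) ⟨v 0, right_mem_Icc.2 hc.1.le,
        sqrt_pos.2 (mul_pos two_pos ((hFnonneg _ (hvIcc 0 self_mem_Ici)).lt_of_ne' hFc))⟩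
  have hβG : β - G (v 0) = ∫ s in v 0..1, √(2 * F s) := by
    have hc := hvIcc 0 self_mem_Ici
    rw [hβ, hG, hG]
    exact intervalIntegral.integral_interval_sub_left (hg.intervalIntegrable_of_Icc (by norm_num))
      ((hg.mono (Icc_subset_Icc_right hc.2)).intervalIntegrable_of_Icc hc.1)
  refine ⟨?_, by linarith⟩
  rw [hh, hβG]
  exact abs_integral_Ioi_mul_deriv_le hg (fun s _ => sqrt_nonneg _) hv hvIcc hv'
    (fun x hx => abs_le_sqrt (by nlinarith [hmodica x y hx])) (hint y)

/-- Bound on `h(y) = ∫_0^∞ u_y u_x dx` by `β - G(u(0,y)) < β`. -/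
theorem stmt_4
    (F : ℝ → ℝ) (u : ℝ → ℝ → ℝ)
    (hF : ContDiffOn ℝ 2 F (Set.Icc (-1) 1))
    (hFnonneg : ∀ s ∈ Set.Icc (-1 : ℝ) 1, 0 ≤ F s)
    (hu : ContDiff ℝ 3 (fun p : ℝ × ℝ => u p.1 p.2))
    (hub : ∀ x y : ℝ, 0 ≤ x → |u x y| < 1)
    (hpde : ∀ x y : ℝ, 0 ≤ x →
      deriv (deriv (fun t => u t y)) x + deriv (deriv (u x)) y = deriv F (u x y))
    (hneumann : ∀ y : ℝ, deriv (fun t => u t y) 0 = 0)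
    (hmono : ∀ x y : ℝ, 0 < x → 0 < deriv (fun t => u t y) x)
    (hmodica : ∀ x y : ℝ, 0 ≤ x →
      (deriv (fun t => u t y) x) ^ 2 + (deriv (u x) y) ^ 2 ≤ 2 * F (u x y))
    (hint : ∀ y : ℝ, IntegrableOn
      (fun x => (deriv (u x) y) * (deriv (fun t => u t y) x)) (Set.Ioi (0 : ℝ)))
    (G : ℝ → ℝ)
    (hG : ∀ t : ℝ, G t = ∫ s in (-1 : ℝ)..t, Real.sqrt (2 * F s))
    (β : ℝ) (hβ : β = G 1)
    (h : ℝ → ℝ)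
    (hh : ∀ y : ℝ, h y = ∫ x in Set.Ioi (0 : ℝ),
      (deriv (u x) y) * (deriv (fun t => u t y) x)) :
    ∀ y : ℝ, |h y| ≤ β - G (u 0 y) ∧ β - G (u 0 y) < β :=
  stmt_4_general F u hF hFnonneg hu hub hneumann hmono hmodica hint G hG β hβ h hh
end

section
/- Let u solve u_xx + u_yy = F'(u) on the half-plane {x ≥ 0} with u_x(0,y)=0, and define h(y) = ∫_0^∞ u_y u_x dx, assuming the integral converges and that u_x(x,y) → 0 and u(x,y) → u⁺(y) in C¹ as x → ∞. Then h'(y) = [F(u⁺(y)) + (1/2)(u⁺)'(y)²] − [F(u(0,y)) + (1/2)u_y(0,y)²]. -/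
/-!
With the momentum density `P = u_y u_x` and the Hamiltonian density
`G = F(u) + u_y²/2 - u_x²/2`, the Allen–Cahn equation is the conservation law `∂_x G = ∂_y P`
for `x > 0`. Integrating it over `[0, R] × [a, b]` and letting `R → ∞` gives
`h b - h a = ∫_a^b (G(∞, y) - G(0, y)) dy`, since the exponential decay makes `G(R, ·)` converge to
`F(u⁺) + (u⁺)'²/2`. The Neumann condition kills `u_x` in `G(0, y)`, and the fundamental theorem of
calculus gives `h'`.
-/

open Real MeasureTheory Set Filter Topology Function

noncomputable def partialX (u : ℝ → ℝ → ℝ) (x y : ℝ) : ℝ := deriv (fun t => u t y) x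

noncomputable def partialY (u : ℝ → ℝ → ℝ) (x y : ℝ) : ℝ := deriv (u x) y

section PartialDerivatives

variable {u : ℝ → ℝ → ℝ} {x y : ℝ}

theorem hasDerivAt_partialX (hu : DifferentiableAt ℝ (uncurry u) (x, y)) :
    HasDerivAt (fun t => u t y) (partialX u x y) x :=
  DifferentiableAt.hasDerivAt (hu.comp (f := fun t => (t, y)) x (by fun_prop) :)

theorem hasDerivAt_partialY (hu : DifferentiableAt ℝ (uncurry u) (x, y)) :
    HasDerivAt (u x) (partialY u x y) y :=
  DifferentiableAt.hasDerivAt (hu.comp (f := fun s => (x, s)) y (by fun_prop) :)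

theorem partialX_eq_fderiv (hu : DifferentiableAt ℝ (uncurry u) (x, y)) :
    partialX u x y = fderiv ℝ (uncurry u) (x, y) (1, 0) :=
  HasDerivAt.deriv
    (hu.hasFDerivAt.comp_hasDerivAt x ((hasDerivAt_id x).prodMk (hasDerivAt_const x y)) :)

theorem partialY_eq_fderiv (hu : DifferentiableAt ℝ (uncurry u) (x, y)) :
    partialY u x y = fderiv ℝ (uncurry u) (x, y) (0, 1) :=
  HasDerivAt.deriv
    (hu.hasFDerivAt.comp_hasDerivAt y ((hasDerivAt_const y x).prodMk (hasDerivAt_id y)) :)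

theorem uncurry_partialX (hu : Differentiable ℝ (uncurry u)) :
    uncurry (partialX u) = fun p => fderiv ℝ (uncurry u) p (1, 0) :=
  funext fun p => partialX_eq_fderiv (hu p)

theorem uncurry_partialY (hu : Differentiable ℝ (uncurry u)) :
    uncurry (partialY u) = fun p => fderiv ℝ (uncurry u) p (0, 1) :=
  funext fun p => partialY_eq_fderiv (hu p)

theorem contDiff_partialX {m n : WithTop ℕ∞} (hu : ContDiff ℝ m (uncurry u)) (hmn : n + 1 ≤ m) :
    ContDiff ℝ n (uncurry (partialX u)) := by
  have hd : Differentiable ℝ (uncurry u) :=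
    hu.differentiable (ne_bot_of_le_ne_bot one_ne_zero (le_add_self.trans hmn))
  rw [uncurry_partialX hd]
  exact (hu.fderiv_right hmn).clm_apply contDiff_const

theorem contDiff_partialY {m n : WithTop ℕ∞} (hu : ContDiff ℝ m (uncurry u)) (hmn : n + 1 ≤ m) :
    ContDiff ℝ n (uncurry (partialY u)) := by
  have hd : Differentiable ℝ (uncurry u) :=
    hu.differentiable (ne_bot_of_le_ne_bot one_ne_zero (le_add_self.trans hmn))
  rw [uncurry_partialY hd]
  exact (hu.fderiv_right hmn).clm_apply contDiff_const

theorem partialY_partialX (hu : ContDiff ℝ 2 (uncurry u)) (x y : ℝ) :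
    partialY (partialX u) x y = partialX (partialY u) x y := by
  have hd : Differentiable ℝ (uncurry u) := hu.differentiable (by norm_num)
  have hd2 : Differentiable ℝ (fderiv ℝ (uncurry u)) :=
    (hu.fderiv_right (m := 1) (by norm_num)).differentiable one_ne_zero
  rw [partialY_eq_fderiv ((contDiff_partialX (n := 1) hu (by norm_num)).differentiable
      one_ne_zero _),
    partialX_eq_fderiv ((contDiff_partialY (n := 1) hu (by norm_num)).differentiable
      one_ne_zero _),
    uncurry_partialX hd, uncurry_partialY hd, fderiv_clm_apply (hd2 _) (differentiableAt_const _),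
    fderiv_clm_apply (hd2 _) (differentiableAt_const _)]
  simpa using (hu.contDiffAt.isSymmSndFDerivAt (by simp)) (0, 1) (1, 0)

end PartialDerivatives

theorem hasDerivAt_comp_of_eventually_mem_Icc {F g : ℝ → ℝ} {g' x a b : ℝ}
    (hF : DifferentiableOn ℝ F (Icc a b)) (hg : HasDerivAt g g' x)
    (hgI : ∀ᶠ t in 𝓝 x, g t ∈ Icc a b) :
    HasDerivAt (fun t => F (g t)) (deriv F (g x) * g') x := by
  have hx : g x ∈ Icc a b := hgI.self_of_nhds
  have hcomp : HasDerivAt (fun t => F (g t)) (derivWithin F (Icc a b) (g x) * g') x :=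
    ((hF _ hx).hasDerivWithinAt.comp x hg.hasDerivWithinAt (fun _ ht => ht) :
      HasDerivWithinAt _ _ {t | g t ∈ Icc a b} x).hasDerivAt hgI
  rcases eq_or_ne g' 0 with rfl | hg'
  · simpa using hcomp
  -- `deriv F` may be junk at `a` and `b`, but `g' ≠ 0` rules out a local extremum of `g` at `x`,
  -- so `g x` is an interior point of `[a, b]`.
  have ha : a < g x := lt_of_le_of_ne hx.1 fun hax =>
    hg' ((IsLocalMin.hasDerivAt_eq_zero (hgI.mono fun _ ht => hax ▸ ht.1)) hg)
  have hb : g x < b := lt_of_le_of_ne hx.2 fun hbx =>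
    hg' ((IsLocalMax.hasDerivAt_eq_zero (hgI.mono fun _ ht => hbx ▸ ht.2)) hg)
  rwa [derivWithin_of_mem_nhds (Icc_mem_nhds ha hb)] at hcomp

theorem intervalIntegral_sub_eq_intervalIntegral_sub {P G q : ℝ → ℝ → ℝ} {x₀ x₁ : ℝ} (a b : ℝ)
    (hx : x₀ ≤ x₁) (hq : Continuous (uncurry q)) (hP : ∀ x y, HasDerivAt (P x) (q x y) y)
    (hGc : ∀ y, ContinuousOn (G · y) (Icc x₀ x₁))
    (hG : ∀ y, ∀ x ∈ Ioo x₀ x₁, HasDerivAt (G · y) (q x y) x) :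
    ∫ x in x₀..x₁, (P x b - P x a) = ∫ y in a..b, (G x₁ y - G x₀ y) :=
  calc ∫ x in x₀..x₁, (P x b - P x a) = ∫ x in x₀..x₁, ∫ y in a..b, q x y :=
        intervalIntegral.integral_congr fun x _ =>
          (intervalIntegral.integral_eq_sub_of_hasDerivAt (fun y _ => hP x y)
            ((hq.comp (continuous_const.prodMk continuous_id)).intervalIntegrable a b)).symm
    _ = ∫ y in a..b, ∫ x in x₀..x₁, q x y :=
        intervalIntegral_intervalIntegral_swap
          ((hq.continuousOn.integrableOn_compact (isCompact_uIcc.prod isCompact_uIcc)).mono_set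
            (prod_mono uIoc_subset_uIcc uIoc_subset_uIcc))
    _ = ∫ y in a..b, (G x₁ y - G x₀ y) :=
        intervalIntegral.integral_congr fun y _ =>
          intervalIntegral.integral_eq_sub_of_hasDerivAt_of_le hx (hGc y) (hG y)
            ((hq.comp (continuous_id.prodMk continuous_const)).intervalIntegrable x₀ x₁)

theorem hasDerivAt_of_sub_eq_intervalIntegral {h Φ : ℝ → ℝ} (hΦ : Continuous Φ)
    (hh : ∀ a b, h b - h a = ∫ y in a..b, Φ y) (y : ℝ) : HasDerivAt h (Φ y) y := by
  rw [show h = fun t => h 0 + ∫ s in (0 : ℝ)..t, Φ s from funext fun t => by linarith [hh 0 t]]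
  exact (hΦ.integral_hasStrictDerivAt 0 y).hasDerivAt.const_add _

theorem tendstoUniformly_of_abs_sub_le_mul_exp {α : Type*} {f : ℝ → α → ℝ} {g : α → ℝ}
    {C ν : ℝ} (hν : 0 < ν) (h : ∀ x y, 0 ≤ x → |f x y - g y| ≤ C * exp (-ν * x)) :
    TendstoUniformly f g atTop := by
  have hexp : Tendsto (fun x => C * exp (-ν * x)) atTop (𝓝 0) := by
    simpa using ((tendsto_exp_atBot.comp
      (tendsto_id.const_mul_atTop_of_neg (neg_neg_of_pos hν))).const_mul C)
  refine Metric.tendstoUniformly_iff.2 fun ε hε => ?_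
  filter_upwards [hexp.eventually_lt_const hε, eventually_ge_atTop 0] with x hxε hx y
  rw [dist_comm, dist_eq]
  exact (h x y hx).trans_lt hxε

theorem TendstoUniformly.continuous_of_continuous_uncurry {f : ℝ → ℝ → ℝ} {g : ℝ → ℝ}
    (h : TendstoUniformly f g atTop) (hf : Continuous (uncurry f)) : Continuous g :=
  h.continuous (Frequently.of_forall fun _ => hf.comp (continuous_const.prodMk continuous_id))

noncomputable def momentum (u : ℝ → ℝ → ℝ) (x y : ℝ) : ℝ := partialY u x y * partialX u x y

noncomputable def hamiltonian (F : ℝ → ℝ) (u : ℝ → ℝ → ℝ) (x y : ℝ) : ℝ :=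
  F (u x y) + 1 / 2 * partialY u x y ^ 2 - 1 / 2 * partialX u x y ^ 2

section AllenCahn

variable {F : ℝ → ℝ} {u : ℝ → ℝ → ℝ} {uplus : ℝ → ℝ}

theorem contDiff_momentum (hu : ContDiff ℝ 2 (uncurry u)) : ContDiff ℝ 1 (uncurry (momentum u)) :=
  (contDiff_partialY hu (by norm_num)).mul (contDiff_partialX hu (by norm_num))

theorem partialY_momentum (hu : ContDiff ℝ 2 (uncurry u)) (x y : ℝ) :
    partialY (momentum u) x y =
      partialY (partialY u) x y * partialX u x y + partialY u x y * partialY (partialX u) x y := by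
  have hux := (contDiff_partialX (n := 1) hu (by norm_num)).differentiable one_ne_zero (x, y)
  have huy := (contDiff_partialY (n := 1) hu (by norm_num)).differentiable one_ne_zero (x, y)
  exact ((hasDerivAt_partialY huy).mul (hasDerivAt_partialY hux)).deriv

theorem hasDerivAt_hamiltonian (hu : ContDiff ℝ 2 (uncurry u))
    (hF : DifferentiableOn ℝ F (Icc (-1) 1)) {x y : ℝ}
    (hub : ∀ᶠ t in 𝓝 x, u t y ∈ Icc (-1) 1)
    (hpde : partialX (partialX u) x y + partialY (partialY u) x y = deriv F (u x y)) :
    HasDerivAt (fun t => hamiltonian F u t y) (partialY (momentum u) x y) x := by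
  have hux := (contDiff_partialX (n := 1) hu (by norm_num)).differentiable one_ne_zero (x, y)
  have huy := (contDiff_partialY (n := 1) hu (by norm_num)).differentiable one_ne_zero (x, y)
  have hFu := hasDerivAt_comp_of_eventually_mem_Icc hF
    (hasDerivAt_partialX (hu.differentiable (by norm_num) (x, y))) hub
  refine ((hFu.add (((hasDerivAt_partialX huy).pow 2).const_mul (1 / 2 : ℝ))).sub
    (((hasDerivAt_partialX hux).pow 2).const_mul (1 / 2 : ℝ))).congr_deriv ?_
  rw [partialY_momentum hu, partialY_partialX hu, ← hpde]
  ring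


theorem continuousOn_hamiltonian (hF : ContinuousOn F (Icc (-1) 1))
    (hu : ContDiff ℝ 1 (uncurry u)) (hub : ∀ x y, 0 ≤ x → |u x y| ≤ 1) :
    ContinuousOn (uncurry (hamiltonian F u)) {p | 0 ≤ p.1} := by
  have hFu : ContinuousOn (fun p : ℝ × ℝ => F (u p.1 p.2)) {p | 0 ≤ p.1} :=
    hF.comp hu.continuous.continuousOn fun p hp => abs_le.1 (hub p.1 p.2 hp)
  have hux := (contDiff_partialX (n := 0) hu le_rfl).continuous
  have huy := (contDiff_partialY (n := 0) hu le_rfl).continuous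
  exact (hFu.add (continuous_const.mul (huy.pow 2)).continuousOn).sub
    (continuous_const.mul (hux.pow 2)).continuousOn

theorem continuous_hamiltonian_right (hF : ContinuousOn F (Icc (-1) 1))
    (hu : ContDiff ℝ 1 (uncurry u)) (hub : ∀ x y, 0 ≤ x → |u x y| ≤ 1) {x : ℝ} (hx : 0 ≤ x) :
    Continuous (hamiltonian F u x) :=
  (continuousOn_hamiltonian hF hu hub).comp_continuous
    (continuous_const.prodMk continuous_id) fun _ => hx

theorem mem_Icc_of_tendsto (hub : ∀ x y, 0 ≤ x → |u x y| ≤ 1) {y : ℝ}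
    (hlim : Tendsto (fun x => u x y) atTop (𝓝 (uplus y))) : uplus y ∈ Icc (-1) 1 :=
  isClosed_Icc.mem_of_tendsto hlim
    ((eventually_ge_atTop 0).mono fun x hx => abs_le.1 (hub x y hx))

theorem continuous_hamiltonian_atTop (hF : ContinuousOn F (Icc (-1) 1))
    (hu : ContDiff ℝ 1 (uncurry u)) (hub : ∀ x y, 0 ≤ x → |u x y| ≤ 1)
    (hu_lim : TendstoUniformly u uplus atTop)
    (huy_lim : TendstoUniformly (partialY u) (deriv uplus) atTop) :
    Continuous fun y => F (uplus y) + 1 / 2 * deriv uplus y ^ 2 := by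
  have hFu : Continuous fun y => F (uplus y) :=
    hF.comp_continuous (hu_lim.continuous_of_continuous_uncurry hu.continuous)
      fun y => mem_Icc_of_tendsto hub (hu_lim.tendsto_at y)
  have huy := huy_lim.continuous_of_continuous_uncurry
    (contDiff_partialY (n := 0) hu le_rfl).continuous
  exact hFu.add (continuous_const.mul (huy.pow 2))

theorem tendsto_intervalIntegral_hamiltonian (hF : ContinuousOn F (Icc (-1) 1))
    (hu : ContDiff ℝ 1 (uncurry u)) (hub : ∀ x y, 0 ≤ x → |u x y| ≤ 1)
    (hu_lim : ∀ y, Tendsto (fun x => u x y) atTop (𝓝 (uplus y)))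
    (hux_lim : TendstoUniformly (partialX u) 0 atTop)
    (huy_lim : TendstoUniformly (partialY u) (deriv uplus) atTop) (a b : ℝ) :
    Tendsto (fun R => ∫ y in a..b, hamiltonian F u R y) atTop
      (𝓝 (∫ y in a..b, (F (uplus y) + 1 / 2 * deriv uplus y ^ 2))) := by
  obtain ⟨M, hM⟩ := isCompact_Icc.exists_bound_of_continuousOn hF
  have huy := huy_lim.continuous_of_continuous_uncurry
    (contDiff_partialY (n := 0) hu le_rfl).continuous
  refine intervalIntegral.tendsto_integral_filter_of_dominated_convergence
    (fun y => M + 1 / 2 * (|deriv uplus y| + 1) ^ 2 + 1 / 2) ?_ ?_ ?_ ?_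
  · filter_upwards [eventually_ge_atTop 0] with R hR
    exact (continuous_hamiltonian_right hF hu hub hR).aestronglyMeasurable
  · filter_upwards [eventually_ge_atTop 0, Metric.tendstoUniformly_iff.1 hux_lim 1 one_pos,
      Metric.tendstoUniformly_iff.1 huy_lim 1 one_pos] with R hR hux huy
    refine ae_of_all _ fun y _ => ?_
    have hFu : |F (u R y)| ≤ M := hM _ (abs_le.1 (hub R y hR))
    have hux : |partialX u R y| ≤ 1 := by
      simpa [dist_eq, abs_sub_comm] using (hux y).le
    have huy : |partialY u R y| ≤ |deriv uplus y| + 1 := by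
      have := (huy y).le
      rw [dist_eq, abs_sub_comm] at this
      linarith [abs_sub_abs_le_abs_sub (partialY u R y) (deriv uplus y)]
    have hux2 : partialX u R y ^ 2 ≤ 1 := by
      nlinarith [sq_abs (partialX u R y), abs_nonneg (partialX u R y)]
    have huy2 : partialY u R y ^ 2 ≤ (|deriv uplus y| + 1) ^ 2 := by
      nlinarith [sq_abs (partialY u R y), abs_nonneg (partialY u R y)]
    obtain ⟨hFl, hFr⟩ := abs_le.1 hFu
    rw [norm_eq_abs, hamiltonian, abs_le]
    constructor <;> nlinarith [sq_nonneg (partialX u R y), sq_nonneg (partialY u R y)]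
  · exact (by fun_prop : Continuous _).intervalIntegrable a b
  · refine ae_of_all _ fun y _ => ?_
    have hFu : Tendsto (fun R => F (u R y)) atTop (𝓝 (F (uplus y))) :=
      (hF _ (mem_Icc_of_tendsto hub (hu_lim y))).tendsto.comp
        (tendsto_nhdsWithin_iff.2 ⟨hu_lim y,
          (eventually_ge_atTop 0).mono fun x hx => abs_le.1 (hub x y hx)⟩)
    simpa [hamiltonian] using
      (hFu.add (((huy_lim.tendsto_at y).pow 2).const_mul (1 / 2 : ℝ))).sub
        (((hux_lim.tendsto_at y).pow 2).const_mul (1 / 2 : ℝ))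

theorem intervalIntegral_momentum_sub (hF : DifferentiableOn ℝ F (Icc (-1) 1))
    (hu : ContDiff ℝ 2 (uncurry u)) (hub : ∀ x y, 0 ≤ x → |u x y| ≤ 1)
    (hpde : ∀ x y, 0 < x →
      partialX (partialX u) x y + partialY (partialY u) x y = deriv F (u x y))
    (a b : ℝ) {R : ℝ} (hR : 0 ≤ R) :
    ∫ x in 0..R, (momentum u x b - momentum u x a) =
      ∫ y in a..b, (hamiltonian F u R y - hamiltonian F u 0 y) :=
  intervalIntegral_sub_eq_intervalIntegral_sub a b hR
    (contDiff_partialY (n := 0) (contDiff_momentum hu) le_rfl).continuous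
    (fun _ _ => hasDerivAt_partialY ((contDiff_momentum hu).differentiable one_ne_zero _))
    (fun _ => (continuousOn_hamiltonian hF.continuousOn (hu.of_le (by norm_num)) hub).comp
      (continuous_id.prodMk continuous_const).continuousOn fun _ hx => hx.1)
    (fun y x hx => hasDerivAt_hamiltonian hu hF
      ((eventually_gt_nhds hx.1).mono fun t ht => abs_le.1 (hub t y ht.le)) (hpde x y hx.1))

theorem integral_momentum_sub (hF : DifferentiableOn ℝ F (Icc (-1) 1))
    (hu : ContDiff ℝ 2 (uncurry u)) (hub : ∀ x y, 0 ≤ x → |u x y| ≤ 1)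
    (hpde : ∀ x y, 0 < x →
      partialX (partialX u) x y + partialY (partialY u) x y = deriv F (u x y))
    (hint : ∀ y, IntegrableOn (fun x => momentum u x y) (Ioi 0))
    (hu_lim : TendstoUniformly u uplus atTop)
    (hux_lim : TendstoUniformly (partialX u) 0 atTop)
    (huy_lim : TendstoUniformly (partialY u) (deriv uplus) atTop) (a b : ℝ) :
    (∫ x in Ioi 0, momentum u x b) - ∫ x in Ioi 0, momentum u x a =
      ∫ y in a..b, (F (uplus y) + 1 / 2 * deriv uplus y ^ 2 - hamiltonian F u 0 y) := by
  have hu1 : ContDiff ℝ 1 (uncurry u) := hu.of_le (by norm_num)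
  have hmom (y R : ℝ) : IntervalIntegrable (fun x => momentum u x y) volume 0 R :=
    ((contDiff_momentum hu).continuous.comp
      (continuous_id.prodMk continuous_const)).intervalIntegrable 0 R
  have hG0 := (continuous_hamiltonian_right hF.continuousOn hu1 hub le_rfl).intervalIntegrable
    (μ := volume) a b
  have hlhs : Tendsto (fun R => ∫ x in 0..R, (momentum u x b - momentum u x a)) atTop
      (𝓝 ((∫ x in Ioi 0, momentum u x b) - ∫ x in Ioi 0, momentum u x a)) := by
    simp_rw [intervalIntegral.integral_sub (hmom b _) (hmom a _)]
    exact (intervalIntegral_tendsto_integral_Ioi 0 (hint b) tendsto_id).sub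
      (intervalIntegral_tendsto_integral_Ioi 0 (hint a) tendsto_id)
  have hrhs : Tendsto (fun R => ∫ y in a..b, (hamiltonian F u R y - hamiltonian F u 0 y)) atTop
      (𝓝 (∫ y in a..b, (F (uplus y) + 1 / 2 * deriv uplus y ^ 2 - hamiltonian F u 0 y))) := by
    rw [intervalIntegral.integral_sub ((continuous_hamiltonian_atTop hF.continuousOn hu1 hub
      hu_lim huy_lim).intervalIntegrable a b) hG0]
    refine ((tendsto_intervalIntegral_hamiltonian hF.continuousOn hu1 hub hu_lim.tendsto_at
      hux_lim huy_lim a b).sub_const _).congr' ?_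
    filter_upwards [eventually_ge_atTop 0] with R hR
    exact (intervalIntegral.integral_sub ((continuous_hamiltonian_right hF.continuousOn hu1 hub
      hR).intervalIntegrable a b) hG0).symm
  exact tendsto_nhds_unique
    (hlhs.congr' ((eventually_ge_atTop 0).mono fun R hR =>
      intervalIntegral_momentum_sub hF hu hub hpde a b hR)) hrhs

end AllenCahn

theorem stmt_5_general
    (F : ℝ → ℝ) (u : ℝ → ℝ → ℝ) (uplus : ℝ → ℝ)
    (hF : ContDiffOn ℝ 2 F (Set.Icc (-1) 1))
    (hu : ContDiff ℝ 3 (fun p : ℝ × ℝ => u p.1 p.2))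
    (hub : ∀ x y : ℝ, 0 ≤ x → |u x y| ≤ 1)
    (hpde : ∀ x y : ℝ, 0 ≤ x →
      deriv (deriv (fun t => u t y)) x + deriv (deriv (u x)) y = deriv F (u x y))
    (hneumann : ∀ y : ℝ, deriv (fun t => u t y) 0 = 0)
    (hint : ∀ y : ℝ, IntegrableOn
      (fun x => (deriv (u x) y) * (deriv (fun t => u t y) x)) (Set.Ioi (0 : ℝ)))
    (hdecay : ∃ C ν : ℝ, 0 < ν ∧ ∀ x y : ℝ, 0 ≤ x →
      |deriv (fun t => u t y) x| + |deriv (u x) y - deriv uplus y| +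
        |u x y - uplus y| ≤ C * Real.exp (-ν * x))
    (h : ℝ → ℝ)
    (hh : ∀ y : ℝ, h y = ∫ x in Set.Ioi (0 : ℝ),
      (deriv (u x) y) * (deriv (fun t => u t y) x)) :
    ∀ y : ℝ, deriv h y =
      (F (uplus y) + (1 / 2) * (deriv uplus y) ^ 2)
        - (F (u 0 y) + (1 / 2) * (deriv (u 0) y) ^ 2) := by
  obtain ⟨C, ν, hν, hdec⟩ := hdecay
  have hdec' : ∀ x y, 0 ≤ x → |partialX u x y| + |partialY u x y - deriv uplus y| +
      |u x y - uplus y| ≤ C * exp (-ν * x) := hdec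
  have hu_lim : TendstoUniformly u uplus atTop :=
    tendstoUniformly_of_abs_sub_le_mul_exp (C := C) hν fun x y hx => by
      linarith [hdec' x y hx, abs_nonneg (partialX u x y),
        abs_nonneg (partialY u x y - deriv uplus y)]
  have hux_lim : TendstoUniformly (partialX u) 0 atTop :=
    tendstoUniformly_of_abs_sub_le_mul_exp (C := C) hν fun x y hx => by
      rw [Pi.zero_apply, sub_zero]
      linarith [hdec' x y hx, abs_nonneg (u x y - uplus y),
        abs_nonneg (partialY u x y - deriv uplus y)]
  have huy_lim : TendstoUniformly (partialY u) (deriv uplus) atTop :=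
    tendstoUniformly_of_abs_sub_le_mul_exp (C := C) hν fun x y hx => by
      linarith [hdec' x y hx, abs_nonneg (u x y - uplus y), abs_nonneg (partialX u x y)]
  have hu1 : ContDiff ℝ 1 (uncurry u) := hu.of_le (by norm_num)
  intro y
  have hderiv := hasDerivAt_of_sub_eq_intervalIntegral (h := h)
    (Φ := fun y => F (uplus y) + 1 / 2 * deriv uplus y ^ 2 - hamiltonian F u 0 y)
    ((continuous_hamiltonian_atTop hF.continuousOn hu1 hub hu_lim huy_lim).sub
      (continuous_hamiltonian_right hF.continuousOn hu1 hub le_rfl))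
    (fun a b => by
      rw [hh, hh]
      exact integral_momentum_sub (hF.differentiableOn (by norm_num)) (hu.of_le (by norm_num)) hub
        (fun x y hx => hpde x y hx.le) hint hu_lim hux_lim huy_lim a b) y
  rw [hderiv.deriv, hamiltonian, partialY, show partialX u 0 y = 0 from hneumann y]
  ring

/-- Derivative formula for `h(y) = ∫_0^∞ u_y u_x dx` on the half-plane. -/
theorem stmt_5
    (F : ℝ → ℝ) (u : ℝ → ℝ → ℝ) (uplus : ℝ → ℝ)
    (hF : ContDiffOn ℝ 2 F (Set.Icc (-1) 1))
    (hu : ContDiff ℝ 3 (fun p : ℝ × ℝ => u p.1 p.2))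
    (hub : ∀ x y : ℝ, 0 ≤ x → |u x y| ≤ 1)
    (hpde : ∀ x y : ℝ, 0 ≤ x →
      deriv (deriv (fun t => u t y)) x + deriv (deriv (u x)) y = deriv F (u x y))
    (hneumann : ∀ y : ℝ, deriv (fun t => u t y) 0 = 0)
    (hint : ∀ y : ℝ, IntegrableOn
      (fun x => (deriv (u x) y) * (deriv (fun t => u t y) x)) (Set.Ioi (0 : ℝ)))
    (hlim : ∀ y : ℝ, Filter.Tendsto (fun x => u x y) Filter.atTop (nhds (uplus y)))
    (hlimy : ∀ y : ℝ, Filter.Tendsto (fun x => deriv (u x) y) Filter.atTop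
      (nhds (deriv uplus y)))
    (hlimx : ∀ y : ℝ,
      Filter.Tendsto (fun x => deriv (fun t => u t y) x) Filter.atTop (nhds 0))
    (hdecay : ∃ C ν : ℝ, 0 < ν ∧ ∀ x y : ℝ, 0 ≤ x →
      |deriv (fun t => u t y) x| + |deriv (u x) y - deriv uplus y| +
        |u x y - uplus y| ≤ C * Real.exp (-ν * x))
    (h : ℝ → ℝ)
    (hh : ∀ y : ℝ, h y = ∫ x in Set.Ioi (0 : ℝ),
      (deriv (u x) y) * (deriv (fun t => u t y) x)) :
    ∀ y : ℝ, deriv h y =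
      (F (uplus y) + (1 / 2) * (deriv uplus y) ^ 2)
        - (F (u 0 y) + (1 / 2) * (deriv (u 0) y) ^ 2) :=
  stmt_5_general F u uplus hF hu hub hpde hneumann hint hdecay h hh
end

section
/- Hamiltonian identity: let u be a C³ solution of u_xx + u_yy = F'(u) on ℝ² such that u(x,y) → ±1 and ∇u(x,y) → 0 as y → ±∞ (uniformly on compact x-sets, with exponential decay in |y|). Then the quantity ρ(x) = ∫_{-∞}^{∞} [F(u(x,y)) + (1/2)u_y(x,y)² − (1/2)u_x(x,y)²] dy is independent of x. -/
open Real MeasureTheory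

/-!
With `e = F(u) + ½ u_y² - ½ u_x²`, the vector field `(e, -u_x u_y)` is divergence free: its
divergence is `u_x (F'(u) - Δu) = 0`. Green's theorem on `[x₁, x₂] × [-R, R]` therefore equates the
difference of the integrals of `e` over the two vertical sides with the flux `∫ u_x u_y` through the
horizontal ones, which is `O(e^{-2νR})`. As `F(±1) = 0` and `F` is Lipschitz on `[-1, 1]`,
`|F(u)| ≤ L |u² - 1|`, so `e` decays exponentially in `y` and letting `R → ∞` gives
`ρ(x₂) - ρ(x₁) = 0`.
-/

open Set Filter Topology
open scoped NNReal

section Calculus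

variable {E G : Type*} [NormedAddCommGroup E] [NormedSpace ℝ E]
  [NormedAddCommGroup G] [NormedSpace ℝ G]

theorem hasFDerivAt_comp_of_forall_mem_Icc {F : ℝ → ℝ} {U : E → ℝ} {a b : ℝ} {p : E}
    (hF : DifferentiableOn ℝ F (Icc a b)) (hU : DifferentiableAt ℝ U p)
    (hUab : ∀ q, U q ∈ Icc a b) :
    HasFDerivAt (fun q => F (U q)) (deriv F (U p) • fderiv ℝ U p) p := by
  by_cases hp : U p ∈ Ioo a b
  · exact ((hF.differentiableAt (Icc_mem_nhds hp.1 hp.2)).hasDerivAt).comp_hasFDerivAt p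
      hU.hasFDerivAt
  -- at an endpoint of `[a, b]` the function `U` is extremal, so both derivatives vanish
  have hDU : fderiv ℝ U p = 0 := by
    rcases (hUab p).1.eq_or_lt with ha | ha
    · exact IsLocalMin.fderiv_eq_zero (.of_forall fun q => ha ▸ (hUab q).1)
    · have hb : U p = b := (hUab p).2.eq_of_not_lt fun hb => hp ⟨ha, hb⟩
      exact IsLocalMax.fderiv_eq_zero (.of_forall fun q => hb ▸ (hUab q).2)
  have h := (hF (U p) (hUab p)).hasDerivWithinAt.comp_hasFDerivWithinAt p
    hU.hasFDerivAt.hasFDerivWithinAt (fun q (_ : q ∈ univ) => hUab q)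
  rw [hasFDerivWithinAt_univ, hDU, smul_zero] at h
  rwa [hDU, smul_zero]

theorem ContDiff.hasFDerivAt_fderiv_apply {U : E → G} (hU : ContDiff ℝ 2 U) (p w : E) :
    HasFDerivAt (fun q => fderiv ℝ U q w) ((fderiv ℝ (fderiv ℝ U) p).flip w) p := by
  have hDU : HasFDerivAt (fderiv ℝ U) (fderiv ℝ (fderiv ℝ U) p) p :=
    ((hU.fderiv_right (m := 1) le_rfl).differentiable one_ne_zero p).hasFDerivAt
  simpa using hDU.clm_apply (hasFDerivAt_const w p)

theorem HasFDerivAt.deriv_slice_fst {V : ℝ × ℝ → G} {L : ℝ × ℝ →L[ℝ] G} {x y : ℝ}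
    (h : HasFDerivAt V L (x, y)) : deriv (fun t => V (t, y)) x = L (1, 0) :=
  (h.comp x (hasFDerivAt_prodMk_left (𝕜 := ℝ) x y)).hasDerivAt.deriv

theorem HasFDerivAt.deriv_slice_snd {V : ℝ × ℝ → G} {L : ℝ × ℝ →L[ℝ] G} {x y : ℝ}
    (h : HasFDerivAt V L (x, y)) : deriv (fun s => V (x, s)) y = L (0, 1) :=
  (h.comp y (hasFDerivAt_prodMk_right (𝕜 := ℝ) x y)).hasDerivAt.deriv

theorem deriv_deriv_slice_fst {V : ℝ × ℝ → G} (hV : ContDiff ℝ 2 V) (x y : ℝ) :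
    deriv (deriv fun t => V (t, y)) x = fderiv ℝ (fderiv ℝ V) (x, y) (1, 0) (1, 0) := by
  have h : deriv (fun t => V (t, y)) = fun t => fderiv ℝ V (t, y) (1, 0) :=
    funext fun t => (hV.differentiable two_ne_zero _).hasFDerivAt.deriv_slice_fst
  simpa [h] using (hV.hasFDerivAt_fderiv_apply (x, y) (1, 0)).deriv_slice_fst

theorem deriv_deriv_slice_snd {V : ℝ × ℝ → G} (hV : ContDiff ℝ 2 V) (x y : ℝ) :
    deriv (deriv fun s => V (x, s)) y = fderiv ℝ (fderiv ℝ V) (x, y) (0, 1) (0, 1) := by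
  have h : deriv (fun s => V (x, s)) = fun s => fderiv ℝ V (x, s) (0, 1) :=
    funext fun s => (hV.differentiable two_ne_zero _).hasFDerivAt.deriv_slice_snd
  simpa [h] using (hV.hasFDerivAt_fderiv_apply (x, y) (0, 1)).deriv_slice_snd

end Calculus

theorem integrable_exp_neg_mul_abs {ν : ℝ} (hν : 0 < ν) :
    Integrable fun y : ℝ => exp (-ν * |y|) := by
  have hloc : LocallyIntegrable fun y : ℝ => exp (-ν * |y|) :=
    Continuous.locallyIntegrable (by fun_prop)
  refine hloc.integrable_of_isBigO_atTop_of_norm_isNegInvariant (g := fun y => exp (-ν * y))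
    (.of_forall fun y => by simp) ?_ ⟨Ioi 0, Ioi_mem_atTop 0, exp_neg_integrableOn_Ioi 0 hν⟩
  exact EventuallyEq.isBigO ((eventually_ge_atTop 0).mono fun y hy => by simp [abs_of_nonneg hy])

theorem LipschitzOnWith.abs_le_mul_abs_sq_sub_one {F : ℝ → ℝ} {K : ℝ≥0}
    (hF : LipschitzOnWith K F (Icc (-1) 1)) (hF1 : F 1 = 0) (hFm1 : F (-1) = 0) {t : ℝ}
    (ht : t ∈ Icc (-1) 1) : |F t| ≤ K * |t ^ 2 - 1| := by
  have h₁ : |F t| ≤ K * |t - 1| := by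
    simpa [hF1, Real.dist_eq] using hF.dist_le_mul t ht 1 (by norm_num)
  have h₂ : |F t| ≤ K * |t + 1| := by
    simpa [hFm1, Real.dist_eq] using hF.dist_le_mul t ht (-1) (by norm_num)
  rw [show t ^ 2 - 1 = (t - 1) * (t + 1) by ring, abs_mul]
  rcases le_total 0 t with h | h
  · refine h₁.trans (mul_le_mul_of_nonneg_left (le_mul_of_one_le_right (abs_nonneg _) ?_) K.2)
    rw [abs_of_nonneg (by linarith)]; linarith
  · refine h₂.trans (mul_le_mul_of_nonneg_left (le_mul_of_one_le_left (abs_nonneg _) ?_) K.2)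
    rw [abs_of_nonpos (by linarith)]; linarith

section Hamiltonian

variable {F : ℝ → ℝ} {U : ℝ × ℝ → ℝ}

noncomputable def hamiltonianDensity (F : ℝ → ℝ) (U : ℝ × ℝ → ℝ) (p : ℝ × ℝ) : ℝ :=
  F (U p) + 1 / 2 * fderiv ℝ U p (0, 1) ^ 2 - 1 / 2 * fderiv ℝ U p (1, 0) ^ 2

theorem hasFDerivAt_hamiltonianDensity {a b : ℝ} (hF : DifferentiableOn ℝ F (Icc a b))
    (hU : ContDiff ℝ 2 U) (hUab : ∀ p, U p ∈ Icc a b) (p : ℝ × ℝ) :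
    HasFDerivAt (hamiltonianDensity F U)
      (deriv F (U p) • fderiv ℝ U p
        + fderiv ℝ U p (0, 1) • (fderiv ℝ (fderiv ℝ U) p).flip (0, 1)
        - fderiv ℝ U p (1, 0) • (fderiv ℝ (fderiv ℝ U) p).flip (1, 0)) p := by
  have hFU := hasFDerivAt_comp_of_forall_mem_Icc hF (hU.differentiable two_ne_zero p) hUab
  have hUy := (hU.hasFDerivAt_fderiv_apply p (0, 1)).pow 2
  have hUx := (hU.hasFDerivAt_fderiv_apply p (1, 0)).pow 2
  refine ((hFU.add (hUy.const_mul (1 / 2))).sub (hUx.const_mul (1 / 2))).congr_fderiv ?_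
  ext <;> simp <;> ring

theorem integral_hamiltonianDensity_sub_eq {a b : ℝ} (hF : DifferentiableOn ℝ F (Icc a b))
    (hU : ContDiff ℝ 2 U) (hUab : ∀ p, U p ∈ Icc a b)
    (hpde : ∀ p, fderiv ℝ (fderiv ℝ U) p (1, 0) (1, 0) + fderiv ℝ (fderiv ℝ U) p (0, 1) (0, 1)
      = deriv F (U p))
    (x₁ x₂ y₁ y₂ : ℝ) :
    (∫ y in y₁..y₂, hamiltonianDensity F U (x₂, y)) - ∫ y in y₁..y₂, hamiltonianDensity F U (x₁, y)
      = (∫ x in x₁..x₂, fderiv ℝ U (x, y₂) (1, 0) * fderiv ℝ U (x, y₂) (0, 1))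
        - ∫ x in x₁..x₂, fderiv ℝ U (x, y₁) (1, 0) * fderiv ℝ U (x, y₁) (0, 1) := by
  set g : ℝ × ℝ → ℝ := fun q => -(fderiv ℝ U q (1, 0) * fderiv ℝ U q (0, 1))
  have hf := hasFDerivAt_hamiltonianDensity hF hU hUab
  have hg p := ((hU.hasFDerivAt_fderiv_apply p (1, 0)).fun_mul
    (hU.hasFDerivAt_fderiv_apply p (0, 1))).fun_neg
  have hdiv p : fderiv ℝ (hamiltonianDensity F U) p (1, 0) + fderiv ℝ g p (0, 1) = 0 := by
    have hsymm := hU.contDiffAt.isSymmSndFDerivAt (by simp) (1, 0) (0, 1) (x := p)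
    rw [(hf p).fderiv, (hg p).fderiv]
    simp only [add_apply, sub_apply, neg_apply, smul_apply, smul_eq_mul,
      ContinuousLinearMap.flip_apply]
    linear_combination -fderiv ℝ U p (1, 0) * hpde p + fderiv ℝ U p (0, 1) * hsymm
  have := integral2_divergence_prod_of_hasFDerivAt (hamiltonianDensity F U) g
    (fderiv ℝ (hamiltonianDensity F U)) (fderiv ℝ g) x₁ y₁ x₂ y₂
    (fun p _ => (hf p).continuousAt.continuousWithinAt)
    (fun p _ => (hg p).continuousAt.continuousWithinAt)
    (fun p _ => (hf p).differentiableAt.hasFDerivAt)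
    (fun p _ => (hg p).differentiableAt.hasFDerivAt)
    (integrableOn_zero.congr_fun (fun p _ => (hdiv p).symm)
      (measurableSet_uIcc.prod measurableSet_uIcc))
  simp only [hdiv, intervalIntegral.integral_zero, g, intervalIntegral.integral_neg] at this
  linarith

theorem integrable_hamiltonianDensity_slice {K : ℝ≥0} {C ν x : ℝ} (hν : 0 < ν)
    (hF : LipschitzOnWith K F (Icc (-1) 1)) (hF1 : F 1 = 0) (hFm1 : F (-1) = 0)
    (hU : ∀ p, U p ∈ Icc (-1) 1) (hcont : Continuous (hamiltonianDensity F U))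
    (hdecay : ∀ y, |U (x, y) ^ 2 - 1| + |fderiv ℝ U (x, y) (1, 0)| + |fderiv ℝ U (x, y) (0, 1)|
      ≤ C * exp (-ν * |y|)) :
    Integrable fun y => hamiltonianDensity F U (x, y) := by
  refine ((((integrable_exp_neg_mul_abs hν).const_mul C).const_mul K).add
    ((integrable_exp_neg_mul_abs (mul_pos two_pos hν)).const_mul (C ^ 2))).mono'
    (hcont.comp (.prodMk_right x)).aestronglyMeasurable (.of_forall fun y => ?_)
  have hy := hdecay y
  set B := C * exp (-ν * |y|)
  have hB : B ^ 2 = C ^ 2 * exp (-(2 * ν) * |y|) := by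
    rw [mul_pow, ← exp_nat_mul]; ring_nf
  have h₀ := abs_nonneg (U (x, y) ^ 2 - 1)
  have h₁ := abs_nonneg (fderiv ℝ U (x, y) (1, 0))
  have h₂ := abs_nonneg (fderiv ℝ U (x, y) (0, 1))
  have hFB : |F (U (x, y))| ≤ K * B :=
    (hF.abs_le_mul_abs_sq_sub_one hF1 hFm1 (hU (x, y))).trans (by gcongr; linarith)
  have hx2 : fderiv ℝ U (x, y) (1, 0) ^ 2 ≤ B ^ 2 := by rw [← sq_abs]; gcongr; linarith
  have hy2 : fderiv ℝ U (x, y) (0, 1) ^ 2 ≤ B ^ 2 := by rw [← sq_abs]; gcongr; linarith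
  rw [Real.norm_eq_abs, hamiltonianDensity, Pi.add_apply, abs_le]
  constructor <;> linarith [abs_le.1 hFB, sq_nonneg (fderiv ℝ U (x, y) (1, 0)),
    sq_nonneg (fderiv ℝ U (x, y) (0, 1))]

theorem tendsto_integral_fderiv_mul_fderiv_cocompact {C ν x₁ x₂ : ℝ} (hν : 0 < ν)
    (hdecay : ∀ x ∈ uIcc x₁ x₂, ∀ y,
      |fderiv ℝ U (x, y) (1, 0)| + |fderiv ℝ U (x, y) (0, 1)| ≤ C * exp (-ν * |y|)) :
    Tendsto (fun y => ∫ x in x₁..x₂, fderiv ℝ U (x, y) (1, 0) * fderiv ℝ U (x, y) (0, 1))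
      (cocompact ℝ) (𝓝 0) := by
  have hbound y : ‖∫ x in x₁..x₂, fderiv ℝ U (x, y) (1, 0) * fderiv ℝ U (x, y) (0, 1)‖
      ≤ (C * exp (-ν * |y|)) ^ 2 * |x₂ - x₁| := by
    refine intervalIntegral.norm_integral_le_of_norm_le_const fun x hx => ?_
    have hxy := hdecay x (uIoc_subset_uIcc hx) y
    have ha := abs_nonneg (fderiv ℝ U (x, y) (1, 0))
    have hb := abs_nonneg (fderiv ℝ U (x, y) (0, 1))
    rw [Real.norm_eq_abs, abs_mul, sq]
    exact mul_le_mul (by linarith) (by linarith) hb (by linarith)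
  have hexp : Tendsto (fun y : ℝ => exp (-ν * |y|)) (cocompact ℝ) (𝓝 0) := by
    refine tendsto_exp_atBot.comp (Tendsto.const_mul_atTop_of_neg (neg_lt_zero.2 hν) ?_)
    exact tendsto_norm_cocompact_atTop
  refine squeeze_zero_norm hbound ?_
  simpa using ((hexp.const_mul C).pow 2).mul_const |x₂ - x₁|

theorem integral_hamiltonianDensity_eq {C ν x₁ x₂ : ℝ} (hν : 0 < ν)
    (hF : ContDiffOn ℝ 1 F (Icc (-1) 1)) (hF1 : F 1 = 0) (hFm1 : F (-1) = 0)
    (hU : ContDiff ℝ 2 U) (hU1 : ∀ p, U p ∈ Icc (-1) 1)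
    (hpde : ∀ p, fderiv ℝ (fderiv ℝ U) p (1, 0) (1, 0) + fderiv ℝ (fderiv ℝ U) p (0, 1) (0, 1)
      = deriv F (U p))
    (hdecay : ∀ x ∈ uIcc x₁ x₂, ∀ y,
      |U (x, y) ^ 2 - 1| + |fderiv ℝ U (x, y) (1, 0)| + |fderiv ℝ U (x, y) (0, 1)|
        ≤ C * exp (-ν * |y|)) :
    ∫ y, hamiltonianDensity F U (x₁, y) = ∫ y, hamiltonianDensity F U (x₂, y) := by
  obtain ⟨K, hK⟩ := hF.exists_lipschitzOnWith one_ne_zero (convex_Icc _ _) isCompact_Icc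
  have hFd : DifferentiableOn ℝ F (Icc (-1) 1) := hF.differentiableOn one_ne_zero
  have hcont : Continuous (hamiltonianDensity F U) := continuous_iff_continuousAt.2 fun p =>
    (hasFDerivAt_hamiltonianDensity hFd hU hU1 p).continuousAt
  have htrunc x (hx : x ∈ uIcc x₁ x₂) :
      Tendsto (fun R => ∫ y in -R..R, hamiltonianDensity F U (x, y)) atTop
        (𝓝 (∫ y, hamiltonianDensity F U (x, y))) :=
    intervalIntegral_tendsto_integral
      (integrable_hamiltonianDensity_slice hν hK hF1 hFm1 hU1 hcont (hdecay x hx))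
      tendsto_neg_atTop_atBot tendsto_id
  have hflux := tendsto_integral_fderiv_mul_fderiv_cocompact (U := U) (C := C) hν
    fun x hx y => by linarith [hdecay x hx y, abs_nonneg (U (x, y) ^ 2 - 1)]
  have hlim : Tendsto (fun R => (∫ y in -R..R, hamiltonianDensity F U (x₂, y))
      - ∫ y in -R..R, hamiltonianDensity F U (x₁, y)) atTop (𝓝 0) := by
    simp_rw [integral_hamiltonianDensity_sub_eq hFd hU hU1 hpde]
    simpa using (hflux.comp (tendsto_id.mono_right atTop_le_cocompact)).sub
      (hflux.comp (tendsto_neg_atTop_atBot.mono_right atBot_le_cocompact))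
  have := tendsto_nhds_unique ((htrunc x₂ right_mem_uIcc).sub (htrunc x₁ left_mem_uIcc)) hlim
  linarith

end Hamiltonian

theorem stmt_6_general
    (F : ℝ → ℝ) (u : ℝ → ℝ → ℝ)
    (hF : ContDiffOn ℝ 2 F (Set.Icc (-1) 1))
    (hF1 : F 1 = 0) (hFm1 : F (-1) = 0)
    (hu : ContDiff ℝ 3 (fun p : ℝ × ℝ => u p.1 p.2))
    (hub : ∀ x y : ℝ, |u x y| ≤ 1)
    (hpde : ∀ x y : ℝ,
      deriv (deriv (fun t => u t y)) x + deriv (deriv (u x)) y = deriv F (u x y))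
    (hdecay : ∀ K : ℝ, 0 < K → ∃ C ν : ℝ, 0 < ν ∧ ∀ x y : ℝ, |x| ≤ K →
      |(u x y) ^ 2 - 1| + |deriv (fun t => u t y) x| + |deriv (u x) y|
        ≤ C * Real.exp (-ν * |y|))
    (ρ : ℝ → ℝ)
    (hρ : ∀ x : ℝ, ρ x = ∫ y : ℝ,
      (F (u x y) + (1 / 2) * (deriv (u x) y) ^ 2
        - (1 / 2) * (deriv (fun t => u t y) x) ^ 2)) :
    ∀ x₁ x₂ : ℝ, ρ x₁ = ρ x₂ := by
  intro x₁ x₂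
  set U : ℝ × ℝ → ℝ := fun p => u p.1 p.2
  have hU : ContDiff ℝ 2 U := hu.of_le (by norm_num)
  have hUx x y : deriv (fun t => u t y) x = fderiv ℝ U (x, y) (1, 0) :=
    (hU.differentiable two_ne_zero _).hasFDerivAt.deriv_slice_fst
  have hUy x y : deriv (u x) y = fderiv ℝ U (x, y) (0, 1) :=
    (hU.differentiable two_ne_zero _).hasFDerivAt.deriv_slice_snd
  have hρU x : ρ x = ∫ y, hamiltonianDensity F U (x, y) := by
    simp only [hρ, hUx, hUy, hamiltonianDensity, U]
  obtain ⟨K, hK, hxK⟩ := (isCompact_uIcc (a := x₁) (b := x₂)).isBounded.exists_pos_norm_le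
  obtain ⟨C, ν, hν, hCν⟩ := hdecay K hK
  rw [hρU, hρU]
  refine integral_hamiltonianDensity_eq (C := C) hν (hF.of_le one_le_two) hF1 hFm1 hU
    (fun p => abs_le.1 (hub p.1 p.2)) (fun ⟨x, y⟩ => ?_) (fun x hx y => ?_)
  · rw [← deriv_deriv_slice_fst hU, ← deriv_deriv_slice_snd hU]
    exact hpde x y
  · simpa only [hUx, hUy] using hCν x y (hxK x hx)

/-- Hamiltonian identity: `ρ(x)` is independent of `x`. -/
theorem stmt_6
    (F : ℝ → ℝ) (u : ℝ → ℝ → ℝ)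
    (hF : ContDiffOn ℝ 2 F (Set.Icc (-1) 1))
    (hF1 : F 1 = 0) (hFm1 : F (-1) = 0)
    (hu : ContDiff ℝ 3 (fun p : ℝ × ℝ => u p.1 p.2))
    (hub : ∀ x y : ℝ, |u x y| ≤ 1)
    (hpde : ∀ x y : ℝ,
      deriv (deriv (fun t => u t y)) x + deriv (deriv (u x)) y = deriv F (u x y))
    (hlimtop : ∀ x : ℝ, Filter.Tendsto (fun y => u x y) Filter.atTop (nhds 1))
    (hlimbot : ∀ x : ℝ, Filter.Tendsto (fun y => u x y) Filter.atBot (nhds (-1)))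
    (hdecay : ∀ K : ℝ, 0 < K → ∃ C ν : ℝ, 0 < ν ∧ ∀ x y : ℝ, |x| ≤ K →
      |(u x y) ^ 2 - 1| + |deriv (fun t => u t y) x| + |deriv (u x) y|
        ≤ C * Real.exp (-ν * |y|))
    (ρ : ℝ → ℝ)
    (hρ : ∀ x : ℝ, ρ x = ∫ y : ℝ,
      (F (u x y) + (1 / 2) * (deriv (u x) y) ^ 2
        - (1 / 2) * (deriv (fun t => u t y) x) ^ 2)) :
    ∀ x₁ x₂ : ℝ, ρ x₁ = ρ x₂ :=
  stmt_6_general F u hF hF1 hFm1 hu hub hpde hdecay ρ hρ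
end

section
/- Suppose 0 < θ₁ < θ₂ < θ₃ < θ₄ < 2π with 0 < θ₁ < π/2, θ₄ = 2π − θ₁, and the two balance equations cos θ₁ + cos θ₄ = −cos θ₂ − cos θ₃ and sin θ₁ + sin θ₂ = −sin θ₃ − sin θ₄ hold, together with θ₂, θ₃ ∈ (π/2, 3π/2) \ {π}. Then θ₂ = π − θ₁ and θ₃ = π + θ₁. -/
/-!
Reflecting the fourth end, `θ₄ = 2π - θ₁`, turns the balance relations into
`sin θ₂ + sin θ₃ = 0` and `cos θ₂ + cos θ₃ = -2 cos θ₁`. On `[π/2, 3π/2]` the sine is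
injective after the shift by `π`, so the first relation forces `θ₂ + θ₃ = 2π`; then
`cos θ₃ = cos θ₂ = -cos θ₁`, and injectivity of the cosine on `[0, π]` gives `θ₂ = π - θ₁`.
-/

open Real Set

namespace Real

theorem add_eq_two_pi_of_sin_add_sin_eq_zero {x y : ℝ}
    (hx : x ∈ Icc (π / 2) (3 * π / 2)) (hy : y ∈ Icc (π / 2) (3 * π / 2))
    (h : sin x + sin y = 0) : x + y = 2 * π := by
  obtain ⟨hx₁, hx₂⟩ := hx
  obtain ⟨hy₁, hy₂⟩ := hy
  have hsin : sin (x - π) = sin (π - y) := by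
    rw [sin_sub_pi, sin_pi_sub]; linarith
  have := injOn_sin ⟨by linarith, by linarith⟩ ⟨by linarith, by linarith⟩ hsin
  linarith

theorem eq_pi_sub_of_cos_eq_neg_cos {x α : ℝ} (hx : x ∈ Icc 0 π) (hα : α ∈ Icc 0 π)
    (h : cos x = -cos α) : x = π - α :=
  injOn_cos hx ⟨by linarith [hα.2], by linarith [hα.1]⟩ (by rw [cos_pi_sub, h])

theorem eq_pi_sub_and_eq_pi_add_of_sin_add_sin_eq_zero {x y α : ℝ}
    (hx : x ∈ Icc (π / 2) (3 * π / 2)) (hy : y ∈ Icc (π / 2) (3 * π / 2)) (hxy : x < y)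
    (hα : α ∈ Icc 0 π) (hsin : sin x + sin y = 0) (hcos : cos x + cos y = -2 * cos α) :
    x = π - α ∧ y = π + α := by
  have hsum := add_eq_two_pi_of_sin_add_sin_eq_zero hx hy hsin
  have hcos_y : cos y = cos x := by
    rw [show y = 2 * π - x by linarith, cos_two_pi_sub]
  have hx_eq : x = π - α :=
    eq_pi_sub_of_cos_eq_neg_cos ⟨by linarith [hx.1, pi_pos], by linarith⟩ hα (by linarith)
  exact ⟨hx_eq, by linarith⟩

end Real

theorem stmt_10_general
    (θ₁ θ₂ θ₃ θ₄ : ℝ)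
    (h23 : θ₂ < θ₃)
    (h1 : 0 < θ₁) (h1' : θ₁ < Real.pi / 2)
    (h4' : θ₄ = 2 * Real.pi - θ₁)
    (h2range : θ₂ ∈ Set.Ioo (Real.pi / 2) (3 * Real.pi / 2))
    (h3range : θ₃ ∈ Set.Ioo (Real.pi / 2) (3 * Real.pi / 2))
    (hbal1 : Real.cos θ₁ + Real.cos θ₄ = -Real.cos θ₂ - Real.cos θ₃)
    (hbal2 : Real.sin θ₁ + Real.sin θ₂ = -Real.sin θ₃ - Real.sin θ₄) :
    θ₂ = Real.pi - θ₁ ∧ θ₃ = Real.pi + θ₁ := by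
  rw [h4', cos_two_pi_sub] at hbal1
  rw [h4', sin_two_pi_sub] at hbal2
  exact eq_pi_sub_and_eq_pi_add_of_sin_add_sin_eq_zero (Ioo_subset_Icc_self h2range)
    (Ioo_subset_Icc_self h3range) h23 ⟨h1.le, by linarith [pi_pos]⟩ (by linarith) (by linarith)

/-- Balance relations force the four ends to be symmetric: `θ₂ = π - θ₁`, `θ₃ = π + θ₁`. -/
theorem stmt_10
    (θ₁ θ₂ θ₃ θ₄ : ℝ)
    (h12 : θ₁ < θ₂) (h23 : θ₂ < θ₃) (h34 : θ₃ < θ₄) (h4 : θ₄ < 2 * Real.pi)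
    (h1 : 0 < θ₁) (h1' : θ₁ < Real.pi / 2)
    (h4' : θ₄ = 2 * Real.pi - θ₁)
    (h2range : θ₂ ∈ Set.Ioo (Real.pi / 2) (3 * Real.pi / 2)) (h2 : θ₂ ≠ Real.pi)
    (h3range : θ₃ ∈ Set.Ioo (Real.pi / 2) (3 * Real.pi / 2)) (h3 : θ₃ ≠ Real.pi)
    (hbal1 : Real.cos θ₁ + Real.cos θ₄ = -Real.cos θ₂ - Real.cos θ₃)
    (hbal2 : Real.sin θ₁ + Real.sin θ₂ = -Real.sin θ₃ - Real.sin θ₄) :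
    θ₂ = Real.pi - θ₁ ∧ θ₃ = Real.pi + θ₁ :=
  stmt_10_general θ₁ θ₂ θ₃ θ₄ h23 h1 h1' h4' h2range h3range hbal1 hbal2
end
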